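/- arXiv:2003.10332 — 2 statements merged into one kernel-verified Lean document; each statement's English description precedes it below -/
import Mathlib

section
/- For every α ∈ [0,1] and all n×n symmetric positive semidefinite matrices X₁, X₂, one has g_{θ,W}(α X₁ + (1−α) X₂) ≥ α g_{θ,W}(X₁) + (1−α) g_{θ,W}(X₂), i.e. the modified Riccati operator g_{θ,W} is matrix-concave on the positive semidefinite cone. (Proposition 1, item 4.) -/
open Matrix

/-- The modified Riccati operator
`g_{θ,W}(X) = A X Aᵀ + Q − θ A X Cᵀ (C X Cᵀ + W)⁻¹ C X Aᵀ`. -/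
noncomputable def gRic {n m : ℕ} (A Q : Matrix (Fin n) (Fin n) ℝ)
    (C : Matrix (Fin m) (Fin n) ℝ) (W : Matrix (Fin m) (Fin m) ℝ) (θ : ℝ)
    (X : Matrix (Fin n) (Fin n) ℝ) : Matrix (Fin n) (Fin n) ℝ :=
  A * X * Aᵀ + Q - θ • (A * X * Cᵀ * (C * X * Cᵀ + W)⁻¹ * (C * X * Aᵀ))

/-!
For a fixed gain `K`, the matrix
`Φ_K(X) = A X Aᵀ + Q + θ (K C X Aᵀ + A X Cᵀ Kᵀ + K (C X Cᵀ + W) Kᵀ)` is affine in `X`, and completing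
the square gives `Φ_K(X) − g_{θ,W}(X) = θ (K + L) S (K + L)ᵀ` with `S = C X Cᵀ + W` and
`L = A X Cᵀ S⁻¹`. Hence `g_{θ,W}` is the pointwise minimum of the affine maps `Φ_K`, attained at
`K = −L`, and a minimum of affine maps is concave.
-/

theorem Matrix.PosSemidef.transpose_eq {ι : Type*} {S : Matrix ι ι ℝ} (hS : S.PosSemidef) :
    Sᵀ = S := by
  simpa only [conjTranspose_eq_transpose_of_trivial] using hS.1.eq

theorem Matrix.PosSemidef.mul_mul_transpose_same {ι κ : Type*} [Fintype ι] [Finite κ]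
    {S : Matrix ι ι ℝ} (hS : S.PosSemidef) (B : Matrix κ ι ℝ) : (B * S * Bᵀ).PosSemidef := by
  simpa only [conjTranspose_eq_transpose_of_trivial] using hS.mul_mul_conjTranspose_same B

theorem Matrix.PosSemidef.mul_mul_transpose_add_posDef {ι κ : Type*} [Fintype ι] [Fintype κ]
    {X : Matrix ι ι ℝ} (hX : X.PosSemidef) (C : Matrix κ ι ℝ) {W : Matrix κ κ ℝ} (hW : W.PosDef) :
    (C * X * Cᵀ + W).PosDef :=
  PosDef.posSemidef_add (hX.mul_mul_transpose_same C) hW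

theorem Matrix.add_mul_inv_mul_mul_transpose_add_mul_inv {R ι κ : Type*} [CommRing R]
    [Fintype κ] [DecidableEq κ] {S : Matrix κ κ R} (hSt : Sᵀ = S) (hS : IsUnit S.det)
    (K T : Matrix ι κ R) :
    (K + T * S⁻¹) * S * (K + T * S⁻¹)ᵀ = K * Tᵀ + T * Kᵀ + K * S * Kᵀ + T * S⁻¹ * Tᵀ := by
  have hSit : (S⁻¹)ᵀ = S⁻¹ := by rw [transpose_nonsing_inv, hSt]
  rw [transpose_add, transpose_mul, hSit]
  simp only [Matrix.mul_add, Matrix.add_mul, Matrix.mul_assoc,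
    mul_nonsing_inv_cancel_left _ _ hS, nonsing_inv_mul_cancel_left _ _ hS]
  abel

section Riccati

variable {n m : ℕ} (A Q : Matrix (Fin n) (Fin n) ℝ) (C : Matrix (Fin m) (Fin n) ℝ)
  (W : Matrix (Fin m) (Fin m) ℝ) (θ : ℝ)

noncomputable def riccatiAffine (K : Matrix (Fin n) (Fin m) ℝ) (X : Matrix (Fin n) (Fin n) ℝ) :
    Matrix (Fin n) (Fin n) ℝ :=
  A * X * Aᵀ + Q + θ • (K * (C * X * Aᵀ) + A * X * Cᵀ * Kᵀ + K * (C * X * Cᵀ + W) * Kᵀ)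

noncomputable def riccatiGain (X : Matrix (Fin n) (Fin n) ℝ) : Matrix (Fin n) (Fin m) ℝ :=
  A * X * Cᵀ * (C * X * Cᵀ + W)⁻¹

theorem riccatiAffine_smul_add_one_sub_smul (K : Matrix (Fin n) (Fin m) ℝ) (α : ℝ)
    (X₁ X₂ : Matrix (Fin n) (Fin n) ℝ) :
    riccatiAffine A Q C W θ K (α • X₁ + (1 - α) • X₂) =
      α • riccatiAffine A Q C W θ K X₁ + (1 - α) • riccatiAffine A Q C W θ K X₂ := by
  simp only [riccatiAffine, Matrix.mul_add, Matrix.add_mul, Matrix.mul_smul, Matrix.smul_mul,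
    smul_add]
  module

variable {W}

theorem riccatiAffine_sub_gRic (hW : W.PosDef) {X : Matrix (Fin n) (Fin n) ℝ}
    (hX : X.PosSemidef) (K : Matrix (Fin n) (Fin m) ℝ) :
    riccatiAffine A Q C W θ K X - gRic A Q C W θ X =
      θ • ((K + riccatiGain A C W X) * (C * X * Cᵀ + W) * (K + riccatiGain A C W X)ᵀ) := by
  have hS := hX.mul_mul_transpose_add_posDef C hW
  have hCXA : C * X * Aᵀ = (A * X * Cᵀ)ᵀ := by
    rw [transpose_mul, transpose_mul, transpose_transpose, hX.transpose_eq, Matrix.mul_assoc]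
  rw [riccatiGain, add_mul_inv_mul_mul_transpose_add_mul_inv hS.posSemidef.transpose_eq
    ((isUnit_iff_isUnit_det _).1 hS.isUnit), riccatiAffine, gRic, hCXA]
  simp only [smul_add]
  abel

theorem gRic_eq_riccatiAffine_neg_gain (hW : W.PosDef) {X : Matrix (Fin n) (Fin n) ℝ}
    (hX : X.PosSemidef) :
    gRic A Q C W θ X = riccatiAffine A Q C W θ (-riccatiGain A C W X) X := by
  have h := riccatiAffine_sub_gRic A Q C θ hW hX (-riccatiGain A C W X)
  rw [neg_add_cancel, Matrix.zero_mul, Matrix.zero_mul, smul_zero, sub_eq_zero] at h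
  exact h.symm

theorem riccatiAffine_sub_gRic_posSemidef (hW : W.PosDef) (hθ : 0 ≤ θ)
    {X : Matrix (Fin n) (Fin n) ℝ} (hX : X.PosSemidef) (K : Matrix (Fin n) (Fin m) ℝ) :
    (riccatiAffine A Q C W θ K X - gRic A Q C W θ X).PosSemidef := by
  rw [riccatiAffine_sub_gRic A Q C θ hW hX K]
  exact ((hX.mul_mul_transpose_add_posDef C hW).posSemidef.mul_mul_transpose_same _).smul hθ

end Riccati

theorem gRic_concave_general {n m : ℕ} (A Q : Matrix (Fin n) (Fin n) ℝ)
    (C : Matrix (Fin m) (Fin n) ℝ) (W : Matrix (Fin m) (Fin m) ℝ) (θ : ℝ)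
    (hW : W.PosDef) (hθ : θ ∈ Set.Ioc (0 : ℝ) 1)
    (α : ℝ) (hα : α ∈ Set.Icc (0 : ℝ) 1)
    (X₁ X₂ : Matrix (Fin n) (Fin n) ℝ)
    (hX₁ : X₁.PosSemidef) (hX₂ : X₂.PosSemidef) :
    (gRic A Q C W θ (α • X₁ + (1 - α) • X₂) -
      (α • gRic A Q C W θ X₁ + (1 - α) • gRic A Q C W θ X₂)).PosSemidef := by
  obtain ⟨hα₀, hα₁⟩ := hα
  have hα₁' : 0 ≤ 1 - α := sub_nonneg.2 hα₁
  have hY : (α • X₁ + (1 - α) • X₂).PosSemidef := (hX₁.smul hα₀).add (hX₂.smul hα₁')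
  set K := -riccatiGain A C W (α • X₁ + (1 - α) • X₂)
  have hgap : gRic A Q C W θ (α • X₁ + (1 - α) • X₂) -
      (α • gRic A Q C W θ X₁ + (1 - α) • gRic A Q C W θ X₂) =
      α • (riccatiAffine A Q C W θ K X₁ - gRic A Q C W θ X₁) +
        (1 - α) • (riccatiAffine A Q C W θ K X₂ - gRic A Q C W θ X₂) := by
    rw [gRic_eq_riccatiAffine_neg_gain A Q C θ hW hY, riccatiAffine_smul_add_one_sub_smul, smul_sub, smul_sub]
    abel
  rw [hgap]
  exact ((riccatiAffine_sub_gRic_posSemidef A Q C θ hW hθ.1.le hX₁ K).smul hα₀).add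
    ((riccatiAffine_sub_gRic_posSemidef A Q C θ hW hθ.1.le hX₂ K).smul hα₁')

/-- Proposition 1, item 4: matrix-concavity of the modified Riccati operator
on the positive semidefinite cone. -/
theorem gRic_concave {n m : ℕ} (A Q : Matrix (Fin n) (Fin n) ℝ)
    (C : Matrix (Fin m) (Fin n) ℝ) (W : Matrix (Fin m) (Fin m) ℝ) (θ : ℝ)
    (hQ : Q.PosSemidef) (hW : W.PosDef) (hθ : θ ∈ Set.Ioc (0 : ℝ) 1)
    (α : ℝ) (hα : α ∈ Set.Icc (0 : ℝ) 1)
    (X₁ X₂ : Matrix (Fin n) (Fin n) ℝ)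
    (hX₁ : X₁.PosSemidef) (hX₂ : X₂.PosSemidef) :
    (gRic A Q C W θ (α • X₁ + (1 - α) • X₂) -
      (α • gRic A Q C W θ X₁ + (1 - α) • gRic A Q C W θ X₂)).PosSemidef :=
  gRic_concave_general A Q C W θ hW hθ α hα X₁ X₂ hX₁ hX₂
end

section
/- Let W be symmetric positive definite, θ ∈ (0,1], and M symmetric positive definite. Suppose X̄ is a symmetric positive definite matrix with X̄ = g_{θ,W}(X̄) and suppose that for every symmetric positive semidefinite X the iterates g_{θ,W}^k(X) converge to X̄ as k → ∞. Then X̄ ≤ M if and only if there exists a symmetric matrix X with 0 < X ≤ M and g_{θ,W}(X) ≤ X. (Fixed-point feasibility equivalence, first step of the proof of Theorem 2 in Appendix D.) -/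
/-!
The θ-Riccati map is a convex combination `g_{θ,W}(X) = (1 - θ) (A X Aᵀ + Q) + θ R(X)` of a
Lyapunov map and the Riccati map `R`. Completing the square in the gain `K` shows that `R(X)` is
the least value of the Joseph form `(A - K C) X (A - K C)ᵀ + K W Kᵀ + Q` over all `K`, attained at
the Kalman gain; each Joseph form is monotone in `X`, hence so is `R` on positive semidefinite
matrices, and so is `g_{θ,W}` for `θ ≤ 1`. If `0 < X ≤ M` and `g_{θ,W}(X) ≤ X`, monotonicity makes
every iterate `g_{θ,W}^k(X) ≤ X`, and the Loewner order is closed, so the limit `X̄` satisfies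
`X̄ ≤ X ≤ M`. Conversely `X̄` itself is such an `X`.
-/

open Matrix Filter

open scoped MatrixOrder ComplexOrder

namespace Matrix

variable {𝕜 n : Type*} [RCLike 𝕜] [Fintype n]

theorem isClosed_setOf_posSemidef : IsClosed {A : Matrix n n 𝕜 | A.PosSemidef} := by
  simp only [posSemidef_iff_dotProduct_mulVec, Set.ofPred_and, Set.ofPred_forall]
  exact (isClosed_eq (by fun_prop) continuous_id).inter
    (isClosed_iInter fun x => isClosed_le continuous_const (by fun_prop))

instance : OrderClosedTopology (Matrix n n 𝕜) :=
  ⟨isClosed_le_of_isClosed_nonneg <| by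
    simpa only [nonneg_iff_posSemidef] using isClosed_setOf_posSemidef⟩

variable {m : Type*} [Fintype m]

theorem PosSemidef.mul_mul_transpose_same_s13 {Z : Matrix n n ℝ} (hZ : Z.PosSemidef)
    (B : Matrix m n ℝ) : (B * Z * Bᵀ).PosSemidef := by
  simpa using hZ.mul_mul_conjTranspose_same B

theorem mul_mul_transpose_le_mul_mul_transpose {X Y : Matrix n n ℝ} (h : X ≤ Y)
    (B : Matrix m n ℝ) : B * X * Bᵀ ≤ B * Y * Bᵀ := by
  rw [le_iff, ← Matrix.sub_mul, ← Matrix.mul_sub]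
  exact (le_iff.mp h).mul_mul_transpose_same_s13 B

theorem PosSemidef.mul_mul_transpose_add_posDef_s13 {Z : Matrix n n ℝ} {W : Matrix m m ℝ}
    (hZ : Z.PosSemidef) (hW : W.PosDef) (B : Matrix m n ℝ) : (B * Z * Bᵀ + W).PosDef :=
  .posSemidef_add (hZ.mul_mul_transpose_same_s13 B) hW

end Matrix

theorem MonotoneOn.iterate_le_of_map_le {α : Type*} [Preorder α] {f : α → α} {s : Set α}
    (hf : MonotoneOn f s) (hs : Set.MapsTo f s s) {x : α} (hx : x ∈ s) (hfx : f x ≤ x) :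
    ∀ k, f^[k] x ≤ x
  | 0 => le_rfl
  | k + 1 => by
    rw [Function.iterate_succ_apply']
    exact (hf (hs.iterate k hx) hx (hf.iterate_le_of_map_le hs hx hfx k)).trans hfx

section Riccati

variable {ι κ : Type*} [Fintype ι] [Fintype κ]

def josephForm (A Q : Matrix ι ι ℝ) (C : Matrix κ ι ℝ) (W : Matrix κ κ ℝ)
    (K : Matrix ι κ ℝ) (Z : Matrix ι ι ℝ) : Matrix ι ι ℝ :=
  (A - K * C) * Z * (A - K * C)ᵀ + K * W * Kᵀ + Q

variable {A Q : Matrix ι ι ℝ} {C : Matrix κ ι ℝ} {W : Matrix κ κ ℝ}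

theorem josephForm_mono (K : Matrix ι κ ℝ) : Monotone (josephForm A Q C W K) := fun X Y h => by
  simp only [josephForm]
  gcongr ?_ + _ + _
  exact mul_mul_transpose_le_mul_mul_transpose h _

theorem josephForm_nonneg (hQ : 0 ≤ Q) (hW : 0 ≤ W) (K : Matrix ι κ ℝ) {Z : Matrix ι ι ℝ}
    (hZ : 0 ≤ Z) : 0 ≤ josephForm A Q C W K Z :=
  add_nonneg (add_nonneg (hZ.posSemidef.mul_mul_transpose_same_s13 _).nonneg
    (hW.posSemidef.mul_mul_transpose_same_s13 K).nonneg) hQ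

variable [DecidableEq κ]

variable (A Q C W) in
noncomputable def riccati (Z : Matrix ι ι ℝ) : Matrix ι ι ℝ :=
  A * Z * Aᵀ + Q - A * Z * Cᵀ * (C * Z * Cᵀ + W)⁻¹ * (C * Z * Aᵀ)

variable (A C W) in
noncomputable def kalmanGain (Z : Matrix ι ι ℝ) : Matrix ι κ ℝ :=
  A * Z * Cᵀ * (C * Z * Cᵀ + W)⁻¹

theorem josephForm_eq_riccati_add {Z : Matrix ι ι ℝ} (hZ : Z.IsSymm) (hW : W.IsSymm)
    (hS : IsUnit (C * Z * Cᵀ + W).det) (K : Matrix ι κ ℝ) :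
    josephForm A Q C W K Z = riccati A Q C W Z
      + (K - kalmanGain A C W Z) * (C * Z * Cᵀ + W) * (K - kalmanGain A C W Z)ᵀ := by
  have hSt : (C * Z * Cᵀ + W)ᵀ = C * Z * Cᵀ + W := by
    simp [transpose_mul, hZ.eq, hW.eq, Matrix.mul_assoc]
  have hGS : kalmanGain A C W Z * (C * Z * Cᵀ + W) = A * Z * Cᵀ := by
    rw [kalmanGain, Matrix.mul_assoc, nonsing_inv_mul _ hS, Matrix.mul_one]
  have hSGt : (C * Z * Cᵀ + W) * (kalmanGain A C W Z)ᵀ = C * Z * Aᵀ := by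
    rw [kalmanGain, transpose_mul, transpose_nonsing_inv, hSt, ← Matrix.mul_assoc,
      mul_nonsing_inv _ hS, Matrix.one_mul]
    simp [transpose_mul, hZ.eq, Matrix.mul_assoc]
  have hJoseph : josephForm A Q C W K Z = A * Z * Aᵀ + Q - K * (C * Z * Aᵀ) - A * Z * Cᵀ * Kᵀ
      + K * (C * Z * Cᵀ + W) * Kᵀ := by
    simp only [josephForm, transpose_sub, transpose_mul, Matrix.mul_add, Matrix.add_mul,
      Matrix.mul_sub, Matrix.sub_mul, Matrix.mul_assoc]
    abel
  have hRiccati : riccati A Q C W Z = A * Z * Aᵀ + Q - kalmanGain A C W Z * (C * Z * Aᵀ) := rfl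
  rw [hJoseph, hRiccati]
  generalize kalmanGain A C W Z = G at hGS hSGt ⊢
  generalize C * Z * Cᵀ + W = S at hGS hSGt ⊢
  rw [transpose_sub, Matrix.mul_sub, Matrix.mul_assoc (K - G) S Gᵀ, hSGt, Matrix.sub_mul K G S, hGS]
  simp only [Matrix.sub_mul, Matrix.mul_assoc]
  abel

theorem josephForm_eq_riccati_add_of_posSemidef {Z : Matrix ι ι ℝ} (hZ : Z.PosSemidef)
    (hW : W.PosDef) (K : Matrix ι κ ℝ) :
    josephForm A Q C W K Z = riccati A Q C W Z
      + (K - kalmanGain A C W Z) * (C * Z * Cᵀ + W) * (K - kalmanGain A C W Z)ᵀ :=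
  josephForm_eq_riccati_add (isHermitian_iff_isSymm.mp hZ.isHermitian)
    (isHermitian_iff_isSymm.mp hW.isHermitian)
    (hZ.mul_mul_transpose_add_posDef_s13 hW C).det_pos.ne'.isUnit K

theorem riccati_eq_josephForm_kalmanGain {Z : Matrix ι ι ℝ} (hZ : Z.PosSemidef) (hW : W.PosDef) :
    riccati A Q C W Z = josephForm A Q C W (kalmanGain A C W Z) Z := by
  rw [josephForm_eq_riccati_add_of_posSemidef hZ hW, sub_self, Matrix.zero_mul, Matrix.zero_mul,
    add_zero]

theorem riccati_le_josephForm {Z : Matrix ι ι ℝ} (hZ : Z.PosSemidef) (hW : W.PosDef)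
    (K : Matrix ι κ ℝ) : riccati A Q C W Z ≤ josephForm A Q C W K Z := by
  rw [josephForm_eq_riccati_add_of_posSemidef hZ hW]
  exact le_add_of_nonneg_right
    ((hZ.mul_mul_transpose_add_posDef_s13 hW C).posSemidef.mul_mul_transpose_same_s13 _).nonneg

theorem riccati_monotoneOn (hW : W.PosDef) : MonotoneOn (riccati A Q C W) (Set.Ici 0) :=
  fun X hX Y hY h => calc
    riccati A Q C W X ≤ josephForm A Q C W (kalmanGain A C W Y) X :=
      riccati_le_josephForm hX.posSemidef hW _
    _ ≤ josephForm A Q C W (kalmanGain A C W Y) Y := josephForm_mono _ h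
    _ = riccati A Q C W Y := (riccati_eq_josephForm_kalmanGain hY.posSemidef hW).symm

theorem riccati_nonneg (hQ : 0 ≤ Q) (hW : W.PosDef) {Z : Matrix ι ι ℝ} (hZ : 0 ≤ Z) :
    0 ≤ riccati A Q C W Z := by
  rw [riccati_eq_josephForm_kalmanGain hZ.posSemidef hW]
  exact josephForm_nonneg hQ hW.posSemidef.nonneg _ hZ

end Riccati

section ModifiedRiccati

variable {n m : ℕ} {A Q : Matrix (Fin n) (Fin n) ℝ} {C : Matrix (Fin m) (Fin n) ℝ}
  {W : Matrix (Fin m) (Fin m) ℝ} {θ : ℝ}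

theorem gRic_eq_smul_add_smul_riccati (Z : Matrix (Fin n) (Fin n) ℝ) :
    gRic A Q C W θ Z = (1 - θ) • (A * Z * Aᵀ + Q) + θ • riccati A Q C W Z := by
  simp only [gRic, riccati]
  module

theorem gRic_monotoneOn (hW : W.PosDef) (hθ₀ : 0 ≤ θ) (hθ₁ : θ ≤ 1) :
    MonotoneOn (gRic A Q C W θ) (Set.Ici 0) := fun X hX Y hY h => by
  simp only [gRic_eq_smul_add_smul_riccati]
  have : 0 ≤ 1 - θ := sub_nonneg.mpr hθ₁
  gcongr
  · exact mul_mul_transpose_le_mul_mul_transpose h A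
  · exact riccati_monotoneOn hW hX hY h

theorem gRic_mapsTo (hQ : 0 ≤ Q) (hW : W.PosDef) (hθ₀ : 0 ≤ θ) (hθ₁ : θ ≤ 1) :
    Set.MapsTo (gRic A Q C W θ) (Set.Ici 0) (Set.Ici 0) := fun Z (hZ : 0 ≤ Z) => by
  rw [Set.mem_Ici, gRic_eq_smul_add_smul_riccati]
  exact add_nonneg
    (smul_nonneg (sub_nonneg.mpr hθ₁)
      (add_nonneg (hZ.posSemidef.mul_mul_transpose_same_s13 A).nonneg hQ))
    (smul_nonneg hθ₀ (riccati_nonneg hQ hW hZ))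

end ModifiedRiccati

theorem fixed_point_feasibility_general {n m : ℕ}
    (A Q : Matrix (Fin n) (Fin n) ℝ) (C : Matrix (Fin m) (Fin n) ℝ)
    (W : Matrix (Fin m) (Fin m) ℝ) (θ : ℝ)
    (hQ : Q.PosSemidef) (hW : W.PosDef) (hθ : θ ∈ Set.Ioc (0 : ℝ) 1)
    (M : Matrix (Fin n) (Fin n) ℝ)
    (Xb : Matrix (Fin n) (Fin n) ℝ) (hXb : Xb.PosDef)
    (hfix : Xb = gRic A Q C W θ Xb)
    (hconv : ∀ X : Matrix (Fin n) (Fin n) ℝ, X.PosSemidef →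
      Tendsto (fun k => (gRic A Q C W θ)^[k] X) atTop (nhds Xb)) :
    (M - Xb).PosSemidef ↔
      ∃ X : Matrix (Fin n) (Fin n) ℝ, X.PosDef ∧ (M - X).PosSemidef ∧
        (X - gRic A Q C W θ X).PosSemidef := by
  refine ⟨fun hXbM => ⟨Xb, hXb, hXbM, le_iff.mp hfix.ge⟩, ?_⟩
  rintro ⟨X, hX, hXM, hgX⟩
  have hXbX : Xb ≤ X := le_of_tendsto' (hconv X hX.posSemidef)
    ((gRic_monotoneOn hW hθ.1.le hθ.2).iterate_le_of_map_le
      (gRic_mapsTo hQ.nonneg hW hθ.1.le hθ.2) hX.posSemidef.nonneg hgX)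
  exact hXbX.trans hXM

/-- Fixed-point feasibility equivalence (first step of the proof of Theorem 2,
Appendix D): `X̄ ≤ M` iff there exists `0 < X ≤ M` with `g_{θ,W}(X) ≤ X`. -/
theorem fixed_point_feasibility {n m : ℕ}
    (A Q : Matrix (Fin n) (Fin n) ℝ) (C : Matrix (Fin m) (Fin n) ℝ)
    (W : Matrix (Fin m) (Fin m) ℝ) (θ : ℝ)
    (hQ : Q.PosSemidef) (hW : W.PosDef) (hθ : θ ∈ Set.Ioc (0 : ℝ) 1)
    (M : Matrix (Fin n) (Fin n) ℝ) (hM : M.PosDef)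
    (Xb : Matrix (Fin n) (Fin n) ℝ) (hXb : Xb.PosDef)
    (hfix : Xb = gRic A Q C W θ Xb)
    (hconv : ∀ X : Matrix (Fin n) (Fin n) ℝ, X.PosSemidef →
      Tendsto (fun k => (gRic A Q C W θ)^[k] X) atTop (nhds Xb)) :
    (M - Xb).PosSemidef ↔
      ∃ X : Matrix (Fin n) (Fin n) ℝ, X.PosDef ∧ (M - X).PosSemidef ∧
        (X - gRic A Q C W θ X).PosSemidef :=
  fixed_point_feasibility_general A Q C W θ hQ hW hθ M Xb hXb hfix hconv
end
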